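/- arXiv:2311.15431 — 5 statements merged into one kernel-verified Lean document; each statement's English description precedes it below -/
import Mathlib

section
/- For any word u over a finite nonempty alphabet A, the piecewise complexity satisfies h(u) = 1 + max{ δ(u, u₁·a·u₂) : u = u₁·u₂ a factorization of u (u₁, u₂ possibly empty), a ∈ A }, and equivalently h(u) = 1 + max{ r(u₁,a) + ℓ(a,u₂) : u = u₁·u₂, a ∈ A }. -/
variable {A : Type*}

/-- Simon's congruence of order `k`: `u` and `v` have the same subwords of length ≤ k. -/
def SimonCong (k : ℕ) (u v : List A) : Prop :=
  ∀ s : List A, s.length ≤ k → (s.Sublist u ↔ s.Sublist v)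

/-- Subword distance `δ(u,v) = sup {k | u ∼ₖ v} ∈ ℕ∞`. -/
noncomputable def sdelta (u v : List A) : ℕ∞ :=
  sSup {d : ℕ∞ | ∃ k : ℕ, d = k ∧ SimonCong k u v}

/-- Right side distance `r(u,t) = δ(u, u·t)`. -/
noncomputable def rdist (u t : List A) : ℕ∞ := sdelta u (u ++ t)

/-- Left side distance `ℓ(t,u) = δ(t·u, u)`. -/
noncomputable def ldist (t u : List A) : ℕ∞ := sdelta (t ++ u) u

/-- Piecewise complexity `h(u)`: least `n` such that any `v` with `u ∼ₙ v` equals `u`. -/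
noncomputable def pcHeight (u : List A) : ℕ :=
  sInf {n : ℕ | ∀ v : List A, SimonCong n u v → v = u}

/-- `u` is `m`-reduced: no strict subword of `u` is `∼ₘ`-equivalent to `u`. -/
def Reduced (m : ℕ) (u : List A) : Prop :=
  ∀ u' : List A, u'.Sublist u → u' ≠ u → ¬ SimonCong m u u'

/-- Piecewise minimality index `ρ(u)`: least `m` such that `u` is `m`-reduced. -/
noncomputable def pcRho (u : List A) : ℕ := sInf {m : ℕ | Reduced m u}

/-- An `A`-arch: contains every letter of `A` but no strict prefix does. -/
def IsArch (A : Type*) [Fintype A] (s : List A) : Prop :=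
  (∀ a : A, a ∈ s) ∧ ∀ t : List A, t <+: s → t ≠ s → ∃ a : A, a ∉ t

/-- The infinite periodic word `u^ω`. -/
def omegaWord (u : List A) (hu : u ≠ []) (i : ℕ) : A :=
  u.get ⟨i % u.length, Nat.mod_lt i (List.length_pos_iff.mpr hu)⟩

/-- The arch-jumping function `α` on `u^ω`: `α(i)` is the least `j > i` such that
every letter of `A` occurs among positions `i, …, j-1` of `u^ω`. -/
noncomputable def archJump (u : List A) (hu : u ≠ []) (i : ℕ) : ℕ :=
  sInf {j : ℕ | i < j ∧ ∀ a : A, ∃ m : ℕ, i ≤ m ∧ m < j ∧ omegaWord u hu m = a}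

/-- `p` is an arch-period of `u` starting at `i`. -/
def IsArchPeriodAt (u : List A) (hu : u ≠ []) (i p : ℕ) : Prop :=
  0 < p ∧ ∃ k : ℕ, (archJump u hu)^[k + p] i ≡ (archJump u hu)^[k] i [MOD u.length]

/-- The arch-period of `u`: the least arch-period starting at 0. -/
noncomputable def archPeriod (u : List A) (hu : u ≠ []) : ℕ :=
  sInf {p : ℕ | IsArchPeriodAt u hu 0 p}

/-- `K_u`: the least `k` with `α^{k+p}(0) ≡ α^k(0) (mod L)`. -/
noncomputable def archTransientIndex (u : List A) (hu : u ≠ []) : ℕ :=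
  sInf {k : ℕ |
    (archJump u hu)^[k + archPeriod u hu] 0 ≡ (archJump u hu)^[k] 0 [MOD u.length]}

/-- The transient `T_u = α^{K_u}(0)`. -/
noncomputable def archTransient (u : List A) (hu : u ≠ []) : ℕ :=
  (archJump u hu)^[archTransientIndex u hu] 0

/-- The span `Δ_u = α^{K_u+p_u}(0) − α^{K_u}(0)`. -/
noncomputable def archSpan (u : List A) (hu : u ≠ []) : ℕ :=
  (archJump u hu)^[archTransientIndex u hu + archPeriod u hu] 0 - archTransient u hu

/-- `u^n`: the `n`-fold concatenation of `u`. -/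
def listPow (u : List A) (n : ℕ) : List A := (List.replicate n u).flatten

/-!
By Simon's lemma, two `∼ₙ`-equivalent words `u ≠ v` have a common `∼ₙ`-equivalent superword
`w`. If `w ≠ u`, some one-letter insertion `u₁ a u₂` of `u` lies between `u` and `w`, hence is
`∼ₙ u`; if `w = u`, some one-letter deletion of `u` is `∼ₙ u`, and then doubling the deleted
letter instead is `∼ₙ u` as well. So `h(u) - 1` is the largest `δ(u, u₁ a u₂)`.

For the second formula: given `s ≼ u₁` and `t ≼ u₂`, the word `s a t` is a subword of `u₁ u₂`
iff `s a ≼ u₁` or `a t ≼ u₂`, so the shortest subword of `u₁ a u₂` missing from `u₁ u₂` has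
length `r(u₁, a) + ℓ(a, u₂) + 1`.
-/

open List

namespace SimonCong

variable {k n : ℕ} {u v w : List A}

theorem zero (u v : List A) : SimonCong 0 u v := fun s hs => by
  rw [List.eq_nil_of_length_eq_zero (Nat.le_zero.mp hs)]
  simp

theorem refl (k : ℕ) (u : List A) : SimonCong k u u := fun _ _ => Iff.rfl

theorem symm (h : SimonCong k u v) : SimonCong k v u := fun s hs => (h s hs).symm

theorem comm : SimonCong k u v ↔ SimonCong k v u := ⟨symm, symm⟩

theorem trans (h₁ : SimonCong k u v) (h₂ : SimonCong k v w) : SimonCong k u w :=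
  fun s hs => (h₁ s hs).trans (h₂ s hs)

theorem mono (h : SimonCong n u v) (hkn : k ≤ n) : SimonCong k u v :=
  fun s hs => h s (hs.trans hkn)

theorem of_sublist_of_sublist (h : SimonCong k u w) (huv : u <+ v) (hvw : v <+ w) :
    SimonCong k u v :=
  fun s hs => ⟨fun hsu => hsu.trans huv, fun hsv => (h s hs).mpr (hsv.trans hvw)⟩

theorem eq_of_length_lt (h : SimonCong k u v) (hk : u.length < k) : v = u := by
  have huv : u <+ v := (h u hk.le).mp (Sublist.refl u)
  by_contra hne
  have hlt : u.length < v.length :=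
    huv.length_le.lt_of_ne fun hl => hne (huv.eq_of_length hl).symm
  have htake : v.take (u.length + 1) <+ u :=
    (h _ (by rw [length_take]; omega)).mpr (take_sublist _ _)
  have := htake.length_le
  rw [length_take] at this
  omega

end SimonCong

namespace List

theorem exists_sublist_cons_of_sublist_cons {t x : List A} {c : A} (h : t <+ c :: x) :
    ∃ τ, τ <+ x ∧ t <+ c :: τ ∧ τ.length ≤ t.length := by
  rcases sublist_cons_iff.mp h with h | ⟨τ, rfl, hτ⟩
  · exact ⟨t, h, sublist_cons_self c t, le_rfl⟩
  · exact ⟨τ, hτ, Sublist.refl _, by simp⟩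

theorem sublist_append_singleton_iff {s l : List A} {c : A} :
    s <+ l ++ [c] ↔ s <+ l ∨ ∃ s₀, s = s₀ ++ [c] ∧ s₀ <+ l := by
  refine ⟨fun h => ?_, ?_⟩
  · obtain ⟨s₀, s₁, rfl, hs₀, hs₁⟩ := sublist_append_iff.mp h
    rcases sublist_singleton.mp hs₁ with rfl | rfl
    · exact .inl (by simpa using hs₀)
    · exact .inr ⟨s₀, rfl, hs₀⟩
  · rintro (h | ⟨s₀, rfl, hs₀⟩)
    · exact h.trans (sublist_append_left l [c])
    · exact hs₀.append (Sublist.refl [c])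

theorem append_singleton_sublist_or_cons_sublist {q₁ q₂ l₁ l₂ : List A} {c : A}
    (h : q₁ ++ c :: q₂ <+ l₁ ++ l₂) : q₁ ++ [c] <+ l₁ ∨ c :: q₂ <+ l₂ := by
  obtain ⟨α, β, heq, hα, hβ⟩ := sublist_append_iff.mp h
  rcases append_eq_append_iff.mp heq with ⟨γ, rfl, hγ⟩ | ⟨γ, rfl, rfl⟩
  · cases γ with
    | nil => exact .inr (by simpa [hγ] using hβ)
    | cons d γ =>
      obtain ⟨rfl, -⟩ := List.cons.inj hγ
      exact .inl ((((nil_sublist γ).cons_cons c).append_left q₁).trans hα)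
  · exact .inr ((sublist_append_right γ _).trans hβ)

theorem exists_insert_sublist_of_sublist {u w : List A} (h : u <+ w) (hne : u ≠ w) :
    ∃ u₁ u₂ c, u = u₁ ++ u₂ ∧ u₁ ++ c :: u₂ <+ w := by
  induction h with
  | slnil => exact absurd rfl hne
  | @cons l₁ l₂ c h _ => exact ⟨[], l₁, c, rfl, h.cons_cons c⟩
  | @cons_cons l₁ l₂ c _ ih =>
    obtain ⟨u₁, u₂, d, rfl, hsub⟩ := ih fun he => hne (he ▸ rfl)
    exact ⟨c :: u₁, u₂, d, rfl, hsub.cons_cons c⟩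

theorem exists_erase_sublist_of_sublist {v u : List A} (h : v <+ u) (hne : v ≠ u) :
    ∃ u₁ u₂ c, u = u₁ ++ c :: u₂ ∧ v <+ u₁ ++ u₂ := by
  induction h with
  | slnil => exact absurd rfl hne
  | @cons l₁ l₂ c h _ => exact ⟨[], l₂, c, rfl, h⟩
  | @cons_cons l₁ l₂ c _ ih =>
    obtain ⟨u₁, u₂, d, rfl, hsub⟩ := ih fun he => hne (he ▸ rfl)
    exact ⟨c :: u₁, u₂, d, rfl, hsub.cons_cons c⟩

end List

theorem simonCong_insert_iff {k : ℕ} {u₁ u₂ : List A} {c : A} :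
    SimonCong k (u₁ ++ u₂) (u₁ ++ c :: u₂) ↔
      ∀ s, s <+ u₁ → ∀ t, t <+ u₂ → s.length + t.length < k → s ++ c :: t <+ u₁ ++ u₂ := by
  refine ⟨fun h s hs t ht hlen => (h _ (by simp; omega)).mpr (hs.append (ht.cons_cons c)),
    fun H s hs => ⟨fun h => h.trans ((sublist_cons_self c u₂).append_left u₁), fun h => ?_⟩⟩
  obtain ⟨s₁, s₂, rfl, hs₁, hs₂⟩ := sublist_append_iff.mp h
  rcases sublist_cons_iff.mp hs₂ with hs₂ | ⟨t, rfl, ht⟩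
  · exact hs₁.append hs₂
  · exact H s₁ hs₁ t ht (by simp at hs; omega)

theorem simonCong_append_singleton_iff {k : ℕ} {u : List A} {c : A} :
    SimonCong k u (u ++ [c]) ↔ ∀ s, s <+ u → s.length < k → s ++ [c] <+ u := by
  simpa using simonCong_insert_iff (k := k) (u₁ := u) (u₂ := []) (c := c)

theorem simonCong_cons_iff {k : ℕ} {u : List A} {c : A} :
    SimonCong k (c :: u) u ↔ ∀ t, t <+ u → t.length < k → c :: t <+ u := by
  simpa [SimonCong.comm (u := c :: u)] using
    simonCong_insert_iff (k := k) (u₁ := []) (u₂ := u) (c := c)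

theorem le_sdelta_iff {k : ℕ} {u v : List A} : (k : ℕ∞) ≤ sdelta u v ↔ SimonCong k u v := by
  refine ⟨fun hk => ?_, fun h => le_sSup ⟨k, rfl, h⟩⟩
  by_contra hnk
  obtain ⟨j, rfl⟩ :=
    Nat.exists_eq_succ_of_ne_zero (n := k) fun h0 => hnk (h0 ▸ SimonCong.zero u v)
  have hbound : sdelta u v ≤ j := by
    refine sSup_le ?_
    rintro _ ⟨i, rfl, hi⟩
    exact Nat.cast_le.mpr (not_lt.mp fun hji => hnk (hi.mono hji))
  exact absurd (hk.trans hbound) (by norm_cast; omega)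

theorem sdelta_eq_natCast_iff {m : ℕ} {u v : List A} :
    sdelta u v = m ↔ SimonCong m u v ∧ ¬ SimonCong (m + 1) u v := by
  rw [← le_sdelta_iff, ← le_sdelta_iff, Nat.cast_add_one, not_le,
    ENat.lt_add_one_iff (ENat.natCast_ne_top m), and_comm, le_antisymm_iff]

theorem exists_sdelta_eq_natCast {u v : List A} (h : u ≠ v) : ∃ m : ℕ, sdelta u v = m := by
  refine ENat.ne_top_iff_exists.mp (fun htop => h ?_) |>.imp fun _ => Eq.symm
  exact (le_sdelta_iff.mp (htop ▸ le_top)).eq_of_length_lt (lt_add_one u.length) |>.symm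

theorem sdelta_insert (u₁ u₂ : List A) (c : A) :
    sdelta (u₁ ++ u₂) (u₁ ++ c :: u₂) = rdist u₁ [c] + ldist [c] u₂ := by
  obtain ⟨m₁, hm₁⟩ := exists_sdelta_eq_natCast (u := u₁) (v := u₁ ++ [c]) (by simp)
  obtain ⟨m₂, hm₂⟩ := exists_sdelta_eq_natCast (u := c :: u₂) (v := u₂) (by simp)
  rw [rdist, ldist, hm₁, singleton_append, hm₂, ← Nat.cast_add, sdelta_eq_natCast_iff,
    simonCong_insert_iff, simonCong_insert_iff]
  rw [sdelta_eq_natCast_iff, simonCong_append_singleton_iff,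
    simonCong_append_singleton_iff] at hm₁
  rw [sdelta_eq_natCast_iff, simonCong_cons_iff, simonCong_cons_iff] at hm₂
  obtain ⟨hr, hr'⟩ := hm₁
  obtain ⟨hl, hl'⟩ := hm₂
  refine ⟨fun s hs t ht hlen => ?_, fun H => ?_⟩
  · rcases lt_or_ge s.length m₁ with hs₁ | hs₁
    · simpa using (hr s hs hs₁).append ht
    · exact hs.append (hl t ht (by omega))
  · push Not at hr' hl'
    obtain ⟨s, hs, hslen, hsc⟩ := hr'
    obtain ⟨t, ht, htlen, hct⟩ := hl'
    rcases append_singleton_sublist_or_cons_sublist (H s hs t ht (by omega)) with h | h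
    exacts [hsc h, hct h]

namespace SimonCong

variable {n : ℕ} {u v : List A}

theorem insert_dup {u₁ u₂ : List A} {c : A} (h : SimonCong n (u₁ ++ u₂) (u₁ ++ c :: u₂)) :
    SimonCong n (u₁ ++ [c] ++ u₂) (u₁ ++ [c] ++ c :: u₂) := by
  rw [simonCong_insert_iff] at h ⊢
  have hsub : u₁ ++ u₂ <+ u₁ ++ [c] ++ u₂ := by simp
  intro s hs t ht hlen
  rcases sublist_append_singleton_iff.mp hs with hs' | ⟨s₀, rfl, hs₀⟩
  · exact (h s hs' t ht hlen).trans hsub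
  · rcases append_singleton_sublist_or_cons_sublist (h s₀ hs₀ t ht (by simp at hlen; omega))
      with hs₀c | hct
    · simpa using (h _ hs₀c t ht hlen).trans hsub
    · exact hs.append hct

theorem append_singleton_sublist_of_ne {p x y s t : List A} {a b : A}
    (h : SimonCong n (p ++ a :: x) (p ++ b :: y)) (hab : a ≠ b) (hs : s <+ p)
    (ht : t <+ a :: x) (hty : ¬ t <+ y) (hlen : s.length + t.length < n) : s ++ [a] <+ p := by
  obtain ⟨τ, hτx, htτ, hτlen⟩ := exists_sublist_cons_of_sublist_cons ht
  have hq : s ++ a :: τ <+ p ++ b :: y :=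
    (h _ (by simp; omega)).mp (hs.append (hτx.cons_cons a))
  rcases append_singleton_sublist_or_cons_sublist hq with hsa | haτ
  · exact hsa
  · exact absurd (htτ.trans (haτ.of_cons_of_ne hab)) hty

theorem insert_or_insert_of_ne {p x y : List A} {a b : A}
    (h : SimonCong n (p ++ a :: x) (p ++ b :: y)) (hab : a ≠ b) :
    SimonCong n (p ++ b :: y) (p ++ a :: b :: y) ∨
      SimonCong n (p ++ a :: x) (p ++ b :: a :: x) := by
  by_contra hcon
  rw [not_or, simonCong_insert_iff, simonCong_insert_iff] at hcon
  push Not at hcon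
  obtain ⟨⟨s₁, hs₁, t₁, ht₁, hlen₁, hbad₁⟩, ⟨s₂, hs₂, t₂, ht₂, hlen₂, hbad₂⟩⟩ := hcon
  have ht₁x : ¬ t₁ <+ x := fun ht₁x =>
    hbad₁ ((h _ (by simp; omega)).mp (hs₁.append (ht₁x.cons_cons a)))
  have ht₂y : ¬ t₂ <+ y := fun ht₂y =>
    hbad₂ ((h _ (by simp; omega)).mpr (hs₂.append (ht₂y.cons_cons b)))
  rcases le_total s₁.length s₂.length with hle | hle
  · have := h.append_singleton_sublist_of_ne hab hs₁ ht₂ ht₂y (by omega)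
    exact hbad₁ (by simpa using this.append ht₁)
  · have := h.symm.append_singleton_sublist_of_ne hab.symm hs₂ ht₁ ht₁x (by omega)
    exact hbad₂ (by simpa using this.append ht₂)

theorem exists_superword_of_append {p u v : List A} (h : SimonCong n (p ++ u) (p ++ v)) :
    ∃ w, u <+ w ∧ v <+ w ∧ SimonCong n (p ++ u) (p ++ w) :=
  match u, v with
  | [], v => ⟨v, nil_sublist v, Sublist.refl v, h⟩
  | a :: x, [] => ⟨a :: x, Sublist.refl _, nil_sublist _, refl n _⟩
  | a :: x, b :: y => by
    by_cases hab : a = b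
    · subst hab
      obtain ⟨w, hxw, hyw, hw⟩ :=
        exists_superword_of_append (p := p ++ [a]) (u := x) (v := y) (by simpa using h)
      exact ⟨a :: w, hxw.cons_cons a, hyw.cons_cons a, by simpa using hw⟩
    rcases h.insert_or_insert_of_ne hab with habs | habs
    · obtain ⟨w, hxw, hyw, hw⟩ := exists_superword_of_append (p := p ++ [a]) (u := x)
        (v := b :: y) (by simpa using h.trans habs)
      exact ⟨a :: w, hxw.cons_cons a, hyw.cons a, by simpa using hw⟩
    · obtain ⟨w, hyw, hxw, hw⟩ := exists_superword_of_append (p := p ++ [b]) (u := y)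
        (v := a :: x) (by simpa using h.symm.trans habs)
      exact ⟨b :: w, hxw.cons b, hyw.cons_cons b, h.trans (by simpa using hw)⟩
termination_by u.length + v.length

/-- Simon's lemma. -/
theorem exists_superword (h : SimonCong n u v) : ∃ w, u <+ w ∧ v <+ w ∧ SimonCong n u w := by
  simpa using exists_superword_of_append (p := []) h

theorem exists_insert (h : SimonCong n u v) (hne : v ≠ u) :
    ∃ u₁ u₂ c, u = u₁ ++ u₂ ∧ SimonCong n u (u₁ ++ c :: u₂) := by
  obtain ⟨w, huw, hvw, hw⟩ := h.exists_superword
  by_cases hwu : u = w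
  · subst hwu
    obtain ⟨u₁, u₂, c, rfl, hv⟩ := exists_erase_sublist_of_sublist hvw hne
    have hdel : SimonCong n (u₁ ++ u₂) (u₁ ++ c :: u₂) :=
      (h.trans (h.symm.of_sublist_of_sublist hv
        ((sublist_cons_self c u₂).append_left u₁))).symm
    exact ⟨u₁ ++ [c], u₂, c, by simp, by simpa using hdel.insert_dup⟩
  · obtain ⟨u₁, u₂, c, rfl, hw'⟩ := exists_insert_sublist_of_sublist huw hwu
    exact ⟨u₁, u₂, c, rfl, hw.of_sublist_of_sublist ((sublist_cons_self c u₂).append_left u₁) hw'⟩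

end SimonCong

theorem eq_of_simonCong_pcHeight {u v : List A} (h : SimonCong (pcHeight u) u v) : v = u := by
  have hmem : pcHeight u ∈ {n : ℕ | ∀ v : List A, SimonCong n u v → v = u} :=
    Nat.sInf_mem ⟨u.length + 1, fun _ hv => hv.eq_of_length_lt (lt_add_one _)⟩
  exact hmem v h

theorem exists_simonCong_ne_of_lt_pcHeight {n : ℕ} {u : List A} (hn : n < pcHeight u) :
    ∃ v, v ≠ u ∧ SimonCong n u v := by
  by_contra! hcon
  exact Nat.notMem_of_lt_sInf hn fun v hv => by_contra fun hne => hcon v hne hv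

theorem pcHeight_pos [Nonempty A] (u : List A) : 0 < pcHeight u := by
  refine Nat.pos_of_ne_zero fun h0 => ?_
  have := eq_of_simonCong_pcHeight (v := u ++ [Classical.arbitrary A]) (h0 ▸ SimonCong.zero _ _)
  simp at this

theorem sdelta_lt_pcHeight {u v : List A} (h : v ≠ u) : sdelta u v < pcHeight u :=
  lt_of_not_ge fun hle => h (eq_of_simonCong_pcHeight (le_sdelta_iff.mp hle))

theorem pcHeight_eq_one_add_sSup_sdelta_insert [Nonempty A] (u : List A) :
    (pcHeight u : ℕ∞) =
      1 + sSup {d | ∃ (u₁ u₂ : List A) (a : A), u = u₁ ++ u₂ ∧ d = sdelta u (u₁ ++ a :: u₂)} := by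
  obtain ⟨m, hm⟩ := Nat.exists_eq_add_one_of_ne_zero (pcHeight_pos u).ne'
  suffices sSup {d | ∃ (u₁ u₂ : List A) (a : A), u = u₁ ++ u₂ ∧ d = sdelta u (u₁ ++ a :: u₂)}
      = m by rw [this, hm, Nat.cast_add_one, add_comm]
  refine le_antisymm (sSup_le ?_) ?_
  · rintro _ ⟨u₁, u₂, a, rfl, rfl⟩
    have := sdelta_lt_pcHeight (u := u₁ ++ u₂) (v := u₁ ++ a :: u₂) (by simp)
    rwa [hm, Nat.cast_add_one, ENat.lt_add_one_iff (ENat.natCast_ne_top m)] at this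
  · obtain ⟨v, hne, hv⟩ := exists_simonCong_ne_of_lt_pcHeight (hm ▸ lt_add_one m)
    obtain ⟨u₁, u₂, c, hu, hc⟩ := hv.exists_insert hne
    exact le_sSup_of_le ⟨u₁, u₂, c, hu, rfl⟩ (le_sdelta_iff.mpr hc)

theorem stmt0_general {A : Type*} [Nonempty A] (u : List A) :
    (pcHeight u : ℕ∞) =
      1 + sSup {d : ℕ∞ | ∃ (u₁ u₂ : List A) (a : A),
          u = u₁ ++ u₂ ∧ d = sdelta u (u₁ ++ [a] ++ u₂)} ∧
    (pcHeight u : ℕ∞) =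
      1 + sSup {d : ℕ∞ | ∃ (u₁ u₂ : List A) (a : A),
          u = u₁ ++ u₂ ∧ d = rdist u₁ [a] + ldist [a] u₂} := by
  have hsets :
      {d : ℕ∞ | ∃ (u₁ u₂ : List A) (a : A), u = u₁ ++ u₂ ∧ d = sdelta u (u₁ ++ a :: u₂)} =
      {d | ∃ (u₁ u₂ : List A) (a : A), u = u₁ ++ u₂ ∧ d = rdist u₁ [a] + ldist [a] u₂} := by
    ext d
    refine exists₃_congr fun u₁ u₂ a => and_congr_right fun hu => ?_
    rw [hu, sdelta_insert]
  simp only [append_assoc, singleton_append]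
  exact ⟨pcHeight_eq_one_add_sSup_sdelta_insert u, hsets ▸ pcHeight_eq_one_add_sSup_sdelta_insert u⟩

/-- characterisations of the piecewise complexity `h(u)`. -/
theorem stmt0 {A : Type*} [Fintype A] [Nonempty A] (u : List A) :
    (pcHeight u : ℕ∞) =
      1 + sSup {d : ℕ∞ | ∃ (u₁ u₂ : List A) (a : A),
          u = u₁ ++ u₂ ∧ d = sdelta u (u₁ ++ [a] ++ u₂)} ∧
    (pcHeight u : ℕ∞) =
      1 + sSup {d : ℕ∞ | ∃ (u₁ u₂ : List A) (a : A),
          u = u₁ ++ u₂ ∧ d = rdist u₁ [a] + ldist [a] u₂} :=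
  stmt0_general u
end

section
/- For any word u over a finite alphabet and any letters a, b, r(u·a, b) ≤ 1 + r(u, a). -/
variable {A : Type*}

theorem List.Sublist.of_concat_concat {s u : List A} {a b : A}
    (h : (s ++ [b]).Sublist (u ++ [a])) : s.Sublist u := by
  have h' : (b :: s.reverse).Sublist (a :: u.reverse) := by
    simpa using List.reverse_sublist.2 h
  simpa using h'.of_cons_cons

theorem le_sdelta {k : ℕ} {u v : List A} (h : SimonCong k u v) : (k : ℕ∞) ≤ sdelta u v :=
  le_sSup ⟨k, rfl, h⟩

theorem sdelta_le_one_add_sdelta {u v u' v' : List A}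
    (h : ∀ k, SimonCong (k + 1) u v → SimonCong k u' v') :
    sdelta u v ≤ 1 + sdelta u' v' := by
  refine sSup_le ?_
  rintro _ ⟨_ | k, rfl, hk⟩
  · simp
  · calc ((k + 1 : ℕ) : ℕ∞) = 1 + k := by push_cast; ring
      _ ≤ 1 + sdelta u' v' := by gcongr; exact le_sdelta (h k hk)

theorem SimonCong.of_succ_append_singleton {k : ℕ} {u : List A} {a b : A}
    (h : SimonCong (k + 1) (u ++ [a]) (u ++ [a] ++ [b])) :
    SimonCong k u (u ++ [a]) := by
  intro s hs
  refine ⟨fun hsu => hsu.trans (List.sublist_append_left u [a]), fun hsua => ?_⟩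
  have hsb : (s ++ [b]).Sublist (u ++ [a] ++ [b]) := hsua.append (List.Sublist.refl [b])
  have hlen : (s ++ [b]).length ≤ k + 1 := by simpa using hs
  exact ((h _ hlen).2 hsb).of_concat_concat

theorem stmt8_general {A : Type*} (u : List A) (a b : A) :
    rdist (u ++ [a]) [b] ≤ 1 + rdist u [a] :=
  sdelta_le_one_add_sdelta fun _ => SimonCong.of_succ_append_singleton

/-- `r(u·a, b) ≤ 1 + r(u, a)`. -/
theorem stmt8 {A : Type*} [Fintype A] (u : List A) (a b : A) :
    rdist (u ++ [a]) [b] ≤ 1 + rdist u [a] :=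
  stmt8_general u a b
end

section
/- For any words u, t over a finite alphabet and any letter a: (i) if t is nonempty then r(u, t) = min{ r(u, b) : b ∈ alph(t) }; (ii) if a does not occur in u then r(u, a) = 0; (iii) if u = u'·a·u'' with a not occurring in u'', then r(u, a) = 1 + r(u', a·u''). -/
variable {A : Type*}

/-! `u ∼ₙ u·t` holds iff every subword of `u·t` of length at most `n` is already a subword of `u`.
Appending the letters of `t` one at a time, a subword that is new must end with the appended
letter `b`, i.e. be `s·b` with `s ≼ u`; hence `u ∼ₙ u·t` iff `u ∼ₙ u·b` for every `b ∈ alph(t)`.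
For (iii), the displayed `a` is the last `a` in `u = u'·a·u''`, so `s·a ≼ u` iff `s ≼ u'`: the
subwords witnessing `u ≁ u·a` are those witnessing `u' ≁ u'·a·u''`, extended by one letter. -/

namespace List

variable {α : Type*}

theorem sublist_append_singleton_iff_s9 {s w : List α} {b : α} :
    s <+ w ++ [b] ↔ s <+ w ∨ ∃ s', s = s' ++ [b] ∧ s' <+ w := by
  constructor
  · intro h
    obtain ⟨l₁, l₂, rfl, h₁, h₂⟩ := sublist_append_iff.mp h
    rcases sublist_singleton.mp h₂ with rfl | rfl
    · exact .inl (by simpa using h₁)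
    · exact .inr ⟨l₁, rfl, h₁⟩
  · rintro (h | ⟨s', rfl, h⟩)
    · exact h.trans (sublist_append_left w [b])
    · exact h.append_right [b]

theorem append_singleton_sublist_of_sublist_append {s w v : List α} {a : α} (ha : a ∉ v)
    (h : s ++ [a] <+ w ++ v) : s ++ [a] <+ w := by
  obtain ⟨l₁, l₂, he, h₁, h₂⟩ := sublist_append_iff.mp h
  rcases eq_nil_or_concat l₂ with rfl | ⟨l, b, rfl⟩
  · simpa [he] using h₁
  · have hab : a = b := by simpa using congrArg getLast? he
    exact absurd (h₂.subset (by simp [hab])) ha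

end List

section SubwordDistance

open List

variable {A : Type*}

theorem SimonCong.mono_s9 {k j : ℕ} {u v : List A} (h : SimonCong k u v) (hj : j ≤ k) :
    SimonCong j u v := fun s hs => h s (hs.trans hj)

theorem simonCong_zero (u v : List A) : SimonCong 0 u v := by
  intro s hs
  rw [length_eq_zero_iff.mp (Nat.le_zero.mp hs)]
  simp

theorem natCast_le_sdelta_iff {u v : List A} (n : ℕ) :
    (n : ℕ∞) ≤ sdelta u v ↔ SimonCong n u v := by
  refine ⟨fun h => ?_, fun h => le_sSup ⟨n, rfl, h⟩⟩
  rcases n with _ | m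
  · exact simonCong_zero u v
  · have hm : (m : ℕ∞) < sdelta u v :=
      (ENat.add_one_le_iff (ENat.natCast_ne_top m)).mp (by exact_mod_cast h)
    obtain ⟨_, ⟨k, rfl, hk⟩, hmk⟩ := lt_sSup_iff.mp hm
    exact hk.mono_s9 (by exact_mod_cast hmk)

theorem simonCong_append_right_iff {n : ℕ} {u t : List A} :
    SimonCong n u (u ++ t) ↔ ∀ s : List A, s.length ≤ n → s <+ u ++ t → s <+ u :=
  ⟨fun h s hs => (h s hs).mpr,
    fun h s hs => ⟨fun hsub => hsub.trans (sublist_append_left u t), h s hs⟩⟩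

theorem simonCong_append_iff_forall_singleton {n : ℕ} {u t : List A} :
    SimonCong n u (u ++ t) ↔ ∀ b ∈ t, SimonCong n u (u ++ [b]) := by
  refine ⟨fun h b hb => ?_, fun h => ?_⟩
  · rw [simonCong_append_right_iff] at h ⊢
    exact fun s hs hsub => h s hs (hsub.trans ((singleton_sublist.mpr hb).append_left u))
  induction t using reverseRecOn with
  | nil => rw [append_nil]; exact fun s _ => Iff.rfl
  | append_singleton t b ih =>
    have ht : SimonCong n u (u ++ t) := ih fun c hc => h c (by simp [hc])
    rw [simonCong_append_right_iff, ← append_assoc]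
    intro s hs hsub
    rcases sublist_append_singleton_iff_s9.mp hsub with hsub | ⟨s', rfl, hs'⟩
    · exact (ht s hs).mpr hsub
    · have hs'u : s' <+ u := (ht s' (by simp at hs; omega)).mpr hs'
      exact (h b (by simp) _ hs).mpr (hs'u.append_right [b])

theorem simonCong_succ_append_singleton_iff {n : ℕ} {a : A} {u' u'' : List A} (ha : a ∉ u'') :
    SimonCong (n + 1) (u' ++ [a] ++ u'') (u' ++ [a] ++ u'' ++ [a]) ↔
      SimonCong n u' (u' ++ ([a] ++ u'')) := by
  rw [simonCong_append_right_iff, simonCong_append_right_iff, ← append_assoc]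
  constructor
  · intro h s hs hsub
    have hsa : s ++ [a] <+ u' ++ [a] ++ u'' :=
      h _ (by simpa using hs) (hsub.append_right [a])
    exact append_sublist_append_right _ |>.mp
      (append_singleton_sublist_of_sublist_append ha hsa)
  · intro h s hs hsub
    rcases sublist_append_singleton_iff_s9.mp hsub with hsub | ⟨s', rfl, hs'⟩
    · exact hsub
    · have hs'u' : s' <+ u' := h s' (by simpa using hs) hs'
      exact (hs'u'.append_right [a]).trans (sublist_append_left _ u'')

theorem rdist_eq_sInf_rdist_singleton (u t : List A) :
    rdist u t = sInf {d : ℕ∞ | ∃ b ∈ t, d = rdist u [b]} := by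
  refine ENat.eq_of_forall_natCast_le_iff fun n => ?_
  rw [rdist, natCast_le_sdelta_iff, simonCong_append_iff_forall_singleton, le_sInf_iff]
  constructor
  · rintro h _ ⟨b, hb, rfl⟩
    exact (natCast_le_sdelta_iff n).mpr (h b hb)
  · exact fun h b hb => (natCast_le_sdelta_iff n).mp (h _ ⟨b, hb, rfl⟩)

theorem rdist_singleton_eq_zero {u : List A} {a : A} (ha : a ∉ u) : rdist u [a] = 0 := by
  refine Order.lt_one_iff.mp (lt_of_not_ge fun h => ha ?_)
  have hcong : SimonCong 1 u (u ++ [a]) := (natCast_le_sdelta_iff 1).mp (by exact_mod_cast h)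
  exact singleton_sublist.mp ((hcong [a] le_rfl).mpr (by simp))

theorem rdist_singleton_eq_one_add {a : A} {u' u'' : List A} (ha : a ∉ u'') :
    rdist (u' ++ [a] ++ u'') [a] = 1 + rdist u' ([a] ++ u'') := by
  refine ENat.eq_of_forall_natCast_le_iff fun n => ?_
  rcases n with _ | m
  · simp
  · rw [rdist, natCast_le_sdelta_iff, simonCong_succ_append_singleton_iff ha, rdist,
      ← natCast_le_sdelta_iff, Nat.cast_succ, add_comm,
      ENat.add_le_add_iff_left ENat.one_ne_top]

end SubwordDistance

theorem stmt9_general {A : Type*} (u t : List A) (a : A) :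
    (t ≠ [] → rdist u t = sInf {d : ℕ∞ | ∃ b ∈ t, d = rdist u [b]}) ∧
    (a ∉ u → rdist u [a] = 0) ∧
    (∀ u' u'' : List A, u = u' ++ [a] ++ u'' → a ∉ u'' →
      rdist u [a] = 1 + rdist u' ([a] ++ u'')) := by
  refine ⟨fun _ => rdist_eq_sInf_rdist_singleton u t, rdist_singleton_eq_zero, ?_⟩
  rintro u' u'' rfl ha
  exact rdist_singleton_eq_one_add ha

/-- recursive computation of `r`. -/
theorem stmt9 {A : Type*} [Fintype A] (u t : List A) (a : A) :
    (t ≠ [] → rdist u t = sInf {d : ℕ∞ | ∃ b ∈ t, d = rdist u [b]}) ∧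
    (a ∉ u → rdist u [a] = 0) ∧
    (∀ u' u'' : List A, u = u' ++ [a] ++ u'' → a ∉ u'' →
      rdist u [a] = 1 + rdist u' ([a] ++ u'')) :=
  stmt9_general u t a
end

section
/- Let u be a nonempty word of length L over a finite alphabet A with alph(u) = A. Then there exists an integer p_u > 0 such that for every i ∈ ℕ and every integer p > 0, p is an arch-period of u starting at i if and only if p is a multiple of p_u. -/
variable {A : Type*}

/-!
The arch-jumping map `α` is monotone, moves every point forward and satisfies
`α (i + L) = α i + L`, so it induces a map `g` on `ZMod L`, and the arch-periods starting at `i`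
are the periods of the cycle that the `g`-orbit of `i` eventually enters. It remains to see that
all cycles of `g` have the same length. Lift points `z`, `w` on cycles of lengths `q`, `r` to
`ℕ`: then `α^[q]` moves the lift of `z` by `a * L` and `α^[r]` moves that of `w` by `b * L`.
Monotonicity forces equal rotation rates, `a * r = b * q`, so `(α^[r])^[q]` moves the lift of `z`
by `q * (b * L)`; since `α^[r]` is monotone and commutes with `· + b * L`, it already moves it by
`b * L`, i.e. `r` is a period of `z`.
-/

open Function

theorem Function.exists_iterate_mem_periodicPts {α : Type*} [Finite α] (g : α → α) (x : α) :
    ∃ k, g^[k] x ∈ periodicPts g := by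
  obtain ⟨m, n, heq, hne⟩ : ∃ m n, g^[m] x = g^[n] x ∧ m ≠ n := by
    simpa [Injective] using not_injective_infinite_finite (g^[·] x)
  wlog hmn : m < n generalizing m n
  · exact this n m heq.symm hne.symm (by omega)
  refine ⟨m, mk_mem_periodicPts (n := n - m) (by omega) ?_⟩
  rw [IsPeriodicPt, IsFixedPt, ← iterate_add_apply, Nat.sub_add_cancel hmn.le, heq]

theorem Function.exists_isPeriodicPt_iterate_iff_dvd {α : Type*} [Finite α] {g : α → α}
    {P : ℕ} (hP : ∀ w ∈ periodicPts g, minimalPeriod g w = P) (x : α) {p : ℕ}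
    (hp : 0 < p) :
    (∃ k, IsPeriodicPt g p (g^[k] x)) ↔ P ∣ p := by
  constructor
  · rintro ⟨k, hk⟩
    exact hP _ (mk_mem_periodicPts hp hk) ▸ hk.minimalPeriod_dvd
  · intro hdvd
    obtain ⟨k, hk⟩ := exists_iterate_mem_periodicPts g x
    exact ⟨k, isPeriodicPt_iff_minimalPeriod_dvd.mpr (hP _ hk ▸ hdvd)⟩

section DegreeOneLift

variable {f : ℕ → ℕ} {L : ℕ}

lemma Function.Commute.add_mul_right (hf : Function.Commute f (· + L)) (t : ℕ) :
    Function.Commute f (· + t * L) := by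
  simpa using hf.iterate_right t

/-- The map induced by `f` on residues mod `L`; it is well defined when `f` commutes with
`· + L`. -/
def residueMap (f : ℕ → ℕ) (L : ℕ) (r : ZMod L) : ZMod L := (f r.val : ZMod L)

lemma semiconj_natCast_residueMap (hf : Function.Commute f (· + L)) :
    Semiconj (Nat.cast : ℕ → ZMod L) f (residueMap f L) := by
  intro n
  have h : f n = f (n % L) + n / L * L := by
    conv_lhs => rw [← Nat.mod_add_div' n L]
    exact hf.add_mul_right _ _
  rw [residueMap, ZMod.val_natCast, h]
  simp

lemma natCast_iterate_eq_residueMap_iterate (hf : Function.Commute f (· + L)) (k n : ℕ) :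
    ((f^[k] n : ℕ) : ZMod L) = (residueMap f L)^[k] n :=
  (semiconj_natCast_residueMap hf).iterate_right k n

lemma exists_iterate_add_modEq_iff (hf : Function.Commute f (· + L)) (n p : ℕ) :
    (∃ k, f^[k + p] n ≡ f^[k] n [MOD L]) ↔
      ∃ k, IsPeriodicPt (residueMap f L) p ((residueMap f L)^[k] n) := by
  simp only [IsPeriodicPt, IsFixedPt, ← iterate_add_apply, ← ZMod.natCast_eq_natCast_iff,
    natCast_iterate_eq_residueMap_iterate hf, add_comm p]

lemma exists_iterate_val_eq_add_mul [NeZero L] (hf : Function.Commute f (· + L)) (hle : id ≤ f)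
    {z : ZMod L} {q : ℕ} (hz : IsPeriodicPt (residueMap f L) q z) :
    ∃ a, f^[q] z.val = z.val + a * L := by
  have hmod : z.val ≡ f^[q] z.val [MOD L] := by
    rw [← ZMod.natCast_eq_natCast_iff, natCast_iterate_eq_residueMap_iterate hf,
      ZMod.natCast_zmod_val]
    exact hz.symm
  have hle' : z.val ≤ f^[q] z.val := id_le_iterate_of_id_le hle q z.val
  obtain ⟨a, ha⟩ := (Nat.modEq_iff_dvd' hle').mp hmod
  exact ⟨a, by rw [mul_comm] at ha; omega⟩

lemma iterate_eq_add_mul (hf : Function.Commute f (· + L)) {x s : ℕ} (hx : f x = x + s * L)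
    (n : ℕ) : f^[n] x = x + n * s * L := by
  simpa [mul_assoc] using (hf.add_mul_right s).iterate_eq_of_map_eq n hx

/-- Monotonicity keeps `f^[n] y` below `f^[n] (x + y * L) = f^[n] x + y * L`, so the
displacements `n * t * L` and `n * s * L` stay a bounded distance apart. -/
lemma rotation_le (hL : 0 < L) (hmono : Monotone f) (hf : Function.Commute f (· + L))
    {x y s t : ℕ} (hx : f x = x + s * L) (hy : f y = y + t * L) : t ≤ s := by
  by_contra! hst
  set n := x + y * L + 1 with hn
  have h := hmono.iterate n (show y ≤ x + y * L by nlinarith)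
  rw [(hf.iterate_left n).add_mul_right y x, iterate_eq_add_mul hf hx,
    iterate_eq_add_mul hf hy] at h
  dsimp only at h
  have h1 : n * (s + 1) * L ≤ n * t * L := by gcongr; omega
  have h2 : n ≤ n * L := Nat.le_mul_of_pos_right n hL
  nlinarith

lemma minimalPeriod_residueMap_dvd [NeZero L] (hmono : Monotone f)
    (hf : Function.Commute f (· + L)) (hle : id ≤ f) {z : ZMod L}
    (hz : z ∈ periodicPts (residueMap f L)) (w : ZMod L) :
    minimalPeriod (residueMap f L) z ∣ minimalPeriod (residueMap f L) w := by
  set g := residueMap f L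
  set qz := minimalPeriod g z
  set qw := minimalPeriod g w
  obtain ⟨a, ha⟩ := exists_iterate_val_eq_add_mul hf hle (isPeriodicPt_minimalPeriod g z)
  obtain ⟨b, hb⟩ := exists_iterate_val_eq_add_mul hf hle (isPeriodicPt_minimalPeriod g w)
  have hzG : f^[qz * qw] z.val = z.val + qw * a * L := by
    rw [iterate_mul, iterate_eq_add_mul (hf.iterate_left qz) ha]
  have hwG : f^[qz * qw] w.val = w.val + qz * b * L := by
    rw [mul_comm, iterate_mul, iterate_eq_add_mul (hf.iterate_left qw) hb]
  have hGf : Function.Commute f^[qz * qw] (· + L) := hf.iterate_left _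
  have hrot : qw * a = qz * b :=
    le_antisymm (rotation_le (NeZero.pos L) (hmono.iterate _) hGf hwG hzG)
      (rotation_le (NeZero.pos L) (hmono.iterate _) hGf hzG hwG)
  have hmove : f^[qw] z.val = z.val + b * L := by
    refine ((hf.iterate_left qw).add_mul_right b |>.iterate_pos_eq_iff_map_eq (hmono.iterate qw)
      (strictMono_id.add_const _) (minimalPeriod_pos_of_mem_periodicPts hz)).mp ?_
    rw [← iterate_mul, mul_comm, hzG, hrot, add_right_iterate_apply, smul_eq_mul, mul_assoc]
  refine IsPeriodicPt.minimalPeriod_dvd ?_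
  rw [IsPeriodicPt, IsFixedPt, ← ZMod.natCast_zmod_val z,
    ← natCast_iterate_eq_residueMap_iterate hf, hmove]
  simp

end DegreeOneLift

section ArchJump

variable (u : List A) (hu : u ≠ [])

lemma omegaWord_add_length (m : ℕ) : omegaWord u hu (m + u.length) = omegaWord u hu m := by
  simp only [omegaWord, Nat.add_mod_right]

lemma archJump_le {i j : ℕ} (hij : i < j)
    (hj : ∀ a : A, ∃ m, i ≤ m ∧ m < j ∧ omegaWord u hu m = a) : archJump u hu i ≤ j :=
  Nat.sInf_le ⟨hij, hj⟩

lemma archJump_spec (hA : ∀ a : A, a ∈ u) (i : ℕ) : i < archJump u hu i ∧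
    ∀ a : A, ∃ m, i ≤ m ∧ m < archJump u hu i ∧ omegaWord u hu m = a := by
  have hL : 0 < u.length := List.length_pos_iff.mpr hu
  refine Nat.sInf_mem
    (s := {j | i < j ∧ ∀ a : A, ∃ m, i ≤ m ∧ m < j ∧ omegaWord u hu m = a})
    ⟨i * u.length + u.length, by nlinarith, fun a => ?_⟩
  obtain ⟨t, rfl⟩ := List.mem_iff_get.mp (hA a)
  refine ⟨t + i * u.length, by nlinarith, by omega, ?_⟩
  simp only [omegaWord, Nat.add_mul_mod_self_right, Nat.mod_eq_of_lt t.2]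

lemma monotone_archJump (hA : ∀ a : A, a ∈ u) : Monotone (archJump u hu) := by
  intro i j hij
  obtain ⟨hj, hletters⟩ := archJump_spec u hu hA j
  refine archJump_le u hu (by omega) fun a => ?_
  obtain ⟨m, hjm, hm, rfl⟩ := hletters a
  exact ⟨m, by omega, hm, rfl⟩

lemma archJump_add_length (hA : ∀ a : A, a ∈ u) (i : ℕ) :
    archJump u hu (i + u.length) = archJump u hu i + u.length := by
  apply le_antisymm
  · obtain ⟨hi, hletters⟩ := archJump_spec u hu hA i
    refine archJump_le u hu (by omega) fun a => ?_
    obtain ⟨m, him, hm, rfl⟩ := hletters a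
    exact ⟨m + u.length, by omega, by omega, omegaWord_add_length u hu m⟩
  · obtain ⟨hi, hletters⟩ := archJump_spec u hu hA (i + u.length)
    suffices archJump u hu i ≤ archJump u hu (i + u.length) - u.length by omega
    refine archJump_le u hu (by omega) fun a => ?_
    obtain ⟨m, him, hm, rfl⟩ := hletters a
    refine ⟨m - u.length, by omega, by omega, ?_⟩
    rw [← omegaWord_add_length u hu, Nat.sub_add_cancel (by omega)]

end ArchJump

theorem stmt16_general {A : Type*} (u : List A) (hu : u ≠ [])
    (hA : ∀ a : A, a ∈ u) :
    ∃ pu : ℕ, 0 < pu ∧ ∀ i p : ℕ, 0 < p →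
      (IsArchPeriodAt u hu i p ↔ pu ∣ p) := by
  have : NeZero u.length := ⟨(List.length_pos_iff.mpr hu).ne'⟩
  have hmono := monotone_archJump u hu hA
  have hf : Function.Commute (archJump u hu) (· + u.length) := archJump_add_length u hu hA
  have hle : id ≤ archJump u hu := fun i => (archJump_spec u hu hA i).1.le
  set g := residueMap (archJump u hu) u.length
  obtain ⟨k, hk⟩ := exists_iterate_mem_periodicPts g 0
  have hP : ∀ w ∈ periodicPts g, minimalPeriod g w = minimalPeriod g (g^[k] 0) := fun w hw =>
    Nat.dvd_antisymm (minimalPeriod_residueMap_dvd hmono hf hle hw _)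
      (minimalPeriod_residueMap_dvd hmono hf hle hk _)
  refine ⟨_, minimalPeriod_pos_of_mem_periodicPts hk, fun i p hp => ?_⟩
  rw [IsArchPeriodAt, exists_iterate_add_modEq_iff hf,
    exists_isPeriodicPt_iterate_iff_dvd hP _ hp]
  exact and_iff_right hp

/-- existence of the arch-period `p_u`: for every starting point `i`,
the arch-periods starting at `i` are exactly the positive multiples of `p_u`. -/
theorem stmt16 {A : Type*} [Fintype A] (u : List A) (hu : u ≠ [])
    (hA : ∀ a : A, a ∈ u) :
    ∃ pu : ℕ, 0 < pu ∧ ∀ i p : ℕ, 0 < p →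
      (IsArchPeriodAt u hu i p ↔ pu ∣ p) :=
  stmt16_general u hu hA
end

section
/- Let u be a nonempty word over a finite alphabet A with alph(u) = A, and let p_u denote its arch-period. If v = u₂·u₁ is a conjugate of u (where u = u₁·u₂), then p_v = p_u; and if v = uᴿ is the reversal of u, then p_v = p_u. -/
variable {A : Type*}

/-!
Extend `u^ω` to a bi-infinite word and the arch-jumping function to a map `F : ℤ → ℤ`. It is
monotone and commutes with translation by `L = |u|`: a lift of a monotone degree-one circle map.
The arch-periods are the `p` such that some point `y` of the orbit satisfies `F^p y = y + c L`.
Since `F` is monotone, one such orbit keeps every other orbit within distance `L` of it, so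
`c / p` (the rotation number) is the same for all of these points. Monotonicity also lets one
take roots: `F^(m b) y = y + m a L` forces `F^b y = y + a L`. So the set of arch-periods does not
depend on the starting point, and this handles conjugates, since conjugating `u` translates `F`.
Reading `u^ω` backwards gives the backward jump `R`. This is the upper adjoint of `F`
(`F x ≤ b ↔ x ≤ R b`), which forces the rotation numbers of `F` and `R` to be opposite, so `F`
and `R` again have the same arch-periods.
-/

theorem GaloisConnection.iterate {α : Type*} [Preorder α] {F R : α → α}
    (gc : GaloisConnection F R) : ∀ n, GaloisConnection F^[n] R^[n]
  | 0 => GaloisConnection.id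
  | n + 1 => by
    rw [Function.iterate_succ, Function.iterate_succ']
    exact gc.compose (gc.iterate n)

theorem semiconj_neg_conj_neg (F : ℤ → ℤ) : Function.Semiconj Neg.neg F fun x => -F (-x) :=
  fun x => by simp

structure IsDeg1Lift (L : ℤ) (F : ℤ → ℤ) : Prop where
  monotone : Monotone F
  map_add : ∀ x, F (x + L) = F x + L

namespace IsDeg1Lift

variable {L : ℤ} {F R : ℤ → ℤ}

theorem map_add_mul (hF : IsDeg1Lift L F) (x t : ℤ) : F (x + t * L) = F x + t * L := by
  induction t using Int.induction_on with
  | zero => simp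
  | succ n ih => rw [add_one_mul, ← add_assoc, hF.map_add, ih, add_assoc]
  | pred n ih =>
    have h := hF.map_add (x + (-n - 1) * L)
    rw [show x + (-(n : ℤ) - 1) * L + L = x + -n * L by ring, ih] at h
    linarith

theorem comp {G : ℤ → ℤ} (hF : IsDeg1Lift L F) (hG : IsDeg1Lift L G) : IsDeg1Lift L (F ∘ G) :=
  ⟨hF.monotone.comp hG.monotone, fun x => by simp [hG.map_add, hF.map_add]⟩

theorem iterate (hF : IsDeg1Lift L F) : ∀ n, IsDeg1Lift L F^[n]
  | 0 => ⟨monotone_id, fun _ => rfl⟩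
  | n + 1 => (hF.iterate n).comp hF

theorem conj_neg (hF : IsDeg1Lift L F) : IsDeg1Lift L (fun x => -F (-x)) :=
  ⟨fun x y hxy => neg_le_neg (hF.monotone (neg_le_neg hxy)), fun x => by
    rw [neg_add, show -x + -L = -x + (-1) * L by ring, hF.map_add_mul]; ring⟩

theorem iterate_apply_of_apply_eq (hF : IsDeg1Lift L F) {y c : ℤ} (h : F y = y + c * L) (n : ℕ) :
    F^[n] y = y + n * c * L := by
  induction n with
  | zero => simp
  | succ n ih => rw [Function.iterate_succ_apply', ih, hF.map_add_mul, h]; push_cast; ring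

theorem apply_mem_Icc_of_apply_eq (hF : IsDeg1Lift L F) (hL : 0 < L) {z c : ℤ}
    (h : F z = z + c * L) (x : ℤ) : F x ∈ Set.Icc (x + c * L - L) (x + c * L + L) := by
  set t := (x - z) / L
  have hlow : z + t * L ≤ x := by linarith [Int.ediv_mul_le (x - z) hL.ne']
  have hup : x ≤ z + t * L + L := by linarith [Int.lt_ediv_add_one_mul_self (x - z) hL]
  have h₁ := hF.monotone hlow
  have h₂ := hF.monotone hup
  rw [hF.map_add, hF.map_add_mul, h] at h₂
  rw [hF.map_add_mul, h] at h₁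
  constructor <;> linarith

theorem eq_of_apply_eq (hF : IsDeg1Lift L F) (hL : 0 < L) {y z a b : ℤ}
    (hy : F y = y + a * L) (hz : F z = z + b * L) : a = b := by
  -- for `F^[2]` the error `L` is less than the gap `2 |a - b| L` between the two orbits
  have hy₂ := hF.iterate_apply_of_apply_eq hy 2
  have hz₂ := (hF.iterate 2).apply_mem_Icc_of_apply_eq hL (hF.iterate_apply_of_apply_eq hz 2) y
  rw [hy₂] at hz₂
  obtain ⟨h₁, h₂⟩ := hz₂
  push_cast at h₁ h₂
  nlinarith

theorem add_eq_zero_of_galoisConnection (hF : IsDeg1Lift L F) (hR : IsDeg1Lift L R) (hL : 0 < L)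
    (gc : GaloisConnection F R) {y z a b : ℤ}
    (hy : F y = y + a * L) (hz : R z = z + b * L) : a + b = 0 := by
  have gc₂ := gc.iterate 2
  have hy₂ := hF.iterate_apply_of_apply_eq hy 2
  have hz₂ := hR.iterate_apply_of_apply_eq hz 2
  have h₁ := gc₂.le_u_l y
  have h₂ := gc₂.l_u_le z
  rw [hy₂, (hR.iterate 2).map_add_mul] at h₁
  rw [hz₂, (hF.iterate 2).map_add_mul] at h₂
  have h₃ := ((hR.iterate 2).apply_mem_Icc_of_apply_eq hL hz₂ y).2
  have h₄ := ((hF.iterate 2).apply_mem_Icc_of_apply_eq hL hy₂ z).1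
  push_cast at h₁ h₂ h₃ h₄
  nlinarith

theorem iterate_succ_lt_of_apply_lt (hF : IsDeg1Lift L F) {y a : ℤ} (h : F y < y + a * L)
    (n : ℕ) :
    F^[n + 1] y < y + (n + 1) * a * L := by
  induction n with
  | zero => simpa using h
  | succ n ih =>
    have := hF.monotone ih.le
    rw [hF.map_add_mul, ← Function.iterate_succ_apply' F] at this
    push_cast
    linarith

theorem apply_eq_of_iterate_eq (hF : IsDeg1Lift L F) {y a : ℤ} {m : ℕ} (hm : 0 < m)
    (h : F^[m] y = y + m * a * L) : F y = y + a * L := by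
  obtain ⟨n, rfl⟩ := Nat.exists_eq_add_of_lt hm
  rw [zero_add] at h
  push_cast at h
  rcases lt_trichotomy (F y) (y + a * L) with hlt | heq | hgt
  · linarith [hF.iterate_succ_lt_of_apply_lt hlt n]
  · exact heq
  · -- this is the previous case for the conjugate `x ↦ -F (-x)`
    have hneg := hF.conj_neg.iterate_succ_lt_of_apply_lt (y := -y) (a := -a) (by simp; linarith) n
    rw [← ((semiconj_neg_conj_neg F).iterate_right _ y)] at hneg
    linarith

end IsDeg1Lift

def periods (L : ℤ) (F : ℤ → ℤ) (x : ℤ) : Set ℕ :=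
  {p | 0 < p ∧ ∃ k, F^[k + p] x ≡ F^[k] x [ZMOD L]}

section Periods

variable {L : ℤ} {F R : ℤ → ℤ} {p q : ℕ} {x : ℤ}

theorem mem_periods_iff :
    p ∈ periods L F x ↔ 0 < p ∧ ∃ k, ∃ c : ℤ, F^[p] (F^[k] x) = F^[k] x + c * L := by
  show _ ∧ _ ↔ _
  refine and_congr_right fun _ => exists_congr fun k => ?_
  rw [add_comm, Function.iterate_add_apply, Int.modEq_comm, Int.modEq_iff_dvd]
  constructor
  · rintro ⟨c, hc⟩
    exact ⟨c, by linarith⟩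
  · rintro ⟨c, hc⟩
    exact ⟨c, by rw [hc]; ring⟩

theorem periods_nonempty (hL : 0 < L) (F : ℤ → ℤ) (x : ℤ) : (periods L F x).Nonempty := by
  obtain ⟨k, l, hkl, h⟩ := (Set.finite_Ico 0 L).exists_lt_map_eq_of_forall_mem
    (f := fun n : ℕ => F^[n] x % L)
    fun n => Set.mem_Ico.2 ⟨Int.emod_nonneg _ hL.ne', Int.emod_lt_of_pos _ hL⟩
  refine ⟨l - k, Nat.sub_pos_of_lt hkl, k, ?_⟩
  rw [Nat.add_sub_cancel' hkl.le]
  exact h.symm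

theorem periods_semiconj {φ : ℤ → ℤ} (hφ : ∀ a b, φ a ≡ φ b [ZMOD L] ↔ a ≡ b [ZMOD L])
    (h : Function.Semiconj φ F R) (x : ℤ) : periods L R (φ x) = periods L F x := by
  ext p
  simp only [periods, Set.mem_ofPred_eq, ← (h.iterate_right _).eq, hφ]

namespace IsDeg1Lift

theorem mul_eq_mul_of_iterate_eq (hF : IsDeg1Lift L F) (hL : 0 < L) {y z c c' : ℤ}
    (hy : F^[p] y = y + c * L) (hz : F^[q] z = z + c' * L) : (q : ℤ) * c = p * c' :=
  (hF.iterate (p * q)).eq_of_apply_eq hL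
    (by rw [Function.iterate_mul, (hF.iterate p).iterate_apply_of_apply_eq hy])
    (by rw [mul_comm, Function.iterate_mul, (hF.iterate q).iterate_apply_of_apply_eq hz])

theorem mul_add_mul_eq_zero_of_galoisConnection (hF : IsDeg1Lift L F) (hR : IsDeg1Lift L R)
    (hL : 0 < L) (gc : GaloisConnection F R) {y z c c' : ℤ}
    (hy : F^[p] y = y + c * L) (hz : R^[q] z = z + c' * L) : (q : ℤ) * c + p * c' = 0 :=
  (hF.iterate (p * q)).add_eq_zero_of_galoisConnection (hR.iterate (p * q)) hL (gc.iterate _)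
    (by rw [Function.iterate_mul, (hF.iterate p).iterate_apply_of_apply_eq hy])
    (by rw [mul_comm, Function.iterate_mul, (hR.iterate q).iterate_apply_of_apply_eq hz])

theorem mem_periods_of_mul_eq (hF : IsDeg1Lift L F) (hp : 0 < p) (hq : 0 < q) {k : ℕ}
    {c c' : ℤ} (hk : F^[p] (F^[k] x) = F^[k] x + c * L) (h : (q : ℤ) * c = p * c') :
    q ∈ periods L F x :=
  mem_periods_iff.2 ⟨hq, k, c', (hF.iterate q).apply_eq_of_iterate_eq hp <| by
    rw [← Function.iterate_mul, mul_comm q p, Function.iterate_mul,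
      (hF.iterate p).iterate_apply_of_apply_eq hk, h]⟩

theorem periods_eq (hF : IsDeg1Lift L F) (hL : 0 < L) (x x' : ℤ) :
    periods L F x = periods L F x' := by
  have hsub {x x' : ℤ} {p : ℕ} (hp : p ∈ periods L F x) : periods L F x' ⊆ periods L F x := by
    intro q hq
    obtain ⟨hp0, k, c, hk⟩ := mem_periods_iff.1 hp
    obtain ⟨hq0, k', c', hk'⟩ := mem_periods_iff.1 hq
    exact hF.mem_periods_of_mul_eq hp0 hq0 hk (hF.mul_eq_mul_of_iterate_eq hL hk hk')
  exact (hsub (periods_nonempty hL F x').some_mem).antisymm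
    (hsub (periods_nonempty hL F x).some_mem)

theorem periods_eq_of_galoisConnection (hF : IsDeg1Lift L F) (hR : IsDeg1Lift L R) (hL : 0 < L)
    (gc : GaloisConnection F R) (x x' : ℤ) : periods L F x = periods L R x' := by
  have transfer {p q : ℕ} (hp : p ∈ periods L F x) (hq : q ∈ periods L R x') :
      q ∈ periods L F x ∧ p ∈ periods L R x' := by
    obtain ⟨hp0, k, c, hk⟩ := mem_periods_iff.1 hp
    obtain ⟨hq0, k', c', hk'⟩ := mem_periods_iff.1 hq
    have h := hF.mul_add_mul_eq_zero_of_galoisConnection hR hL gc hk hk'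
    exact ⟨hF.mem_periods_of_mul_eq hp0 hq0 hk (c' := -c') (by linarith),
      hR.mem_periods_of_mul_eq hq0 hp0 hk' (c' := -c) (by linarith)⟩
  exact Set.Subset.antisymm (fun p hp => (transfer hp (periods_nonempty hL R x').some_mem).2)
    (fun q hq => (transfer (periods_nonempty hL F x).some_mem hq).1)

end IsDeg1Lift

end Periods

section Word

variable {w w' : ℤ → A} {a b x L : ℤ}

def Covers (w : ℤ → A) (a b : ℤ) : Prop :=
  a < b ∧ ∀ c : A, ∃ m, a ≤ m ∧ m < b ∧ w m = c

theorem Covers.mono {a' b' : ℤ} (h : Covers w a b) (ha : a' ≤ a) (hb : b ≤ b') :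
    Covers w a' b' :=
  ⟨by linarith [h.1], fun c => (h.2 c).imp fun _ ⟨h₁, h₂, h₃⟩ => ⟨by linarith, by linarith, h₃⟩⟩

theorem covers_comp_add_iff (d : ℤ) :
    Covers (fun j => w (j + d)) a b ↔ Covers w (a + d) (b + d) := by
  refine and_congr (by constructor <;> intro <;> linarith) (forall_congr' fun c => ⟨?_, ?_⟩)
  · rintro ⟨m, h₁, h₂, h₃⟩
    exact ⟨m + d, by linarith, by linarith, h₃⟩
  · rintro ⟨m, h₁, h₂, h₃⟩
    exact ⟨m - d, by linarith, by linarith, by simpa using h₃⟩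

theorem covers_reflect_iff (hw' : ∀ j, w' j = w (-1 - j)) :
    Covers w' a b ↔ Covers w (-b) (-a) := by
  refine and_congr (by constructor <;> intro <;> linarith) (forall_congr' fun c => ⟨?_, ?_⟩)
  · rintro ⟨m, h₁, h₂, h₃⟩
    exact ⟨-1 - m, by linarith, by linarith, by rw [← hw', h₃]⟩
  · rintro ⟨m, h₁, h₂, h₃⟩
    exact ⟨-1 - m, by linarith, by linarith, by rw [hw', sub_sub_cancel, h₃]⟩

noncomputable def wordJump (w : ℤ → A) (x : ℤ) : ℤ := sInf {b | Covers w x b}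

theorem wordJump_le_iff (hw : ∀ x, Covers w x (x + L)) : wordJump w x ≤ b ↔ Covers w x b := by
  have hbdd : BddBelow {b | Covers w x b} := ⟨x, fun _ hb => hb.1.le⟩
  exact ⟨fun h => (Int.csInf_mem ⟨_, hw x⟩ hbdd).mono le_rfl h, fun h => csInf_le hbdd h⟩

theorem covers_wordJump (hw : ∀ x, Covers w x (x + L)) (x : ℤ) : Covers w x (wordJump w x) :=
  (wordJump_le_iff hw).1 le_rfl

theorem wordJump_comp_add (hw : ∀ x, Covers w x (x + L)) (d x : ℤ) :
    wordJump (fun j => w (j + d)) x = wordJump w (x + d) - d := by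
  have hw' (x : ℤ) : Covers (fun j => w (j + d)) x (x + L) :=
    (covers_comp_add_iff d).2 (by simpa [add_right_comm] using hw (x + d))
  refine eq_of_forall_ge_iff fun b => ?_
  rw [wordJump_le_iff hw', covers_comp_add_iff, ← wordJump_le_iff hw, sub_le_iff_le_add]

theorem isDeg1Lift_wordJump (hw : ∀ x, Covers w x (x + L)) (hper : ∀ x, w (x + L) = w x) :
    IsDeg1Lift L (wordJump w) where
  monotone _ _ hxy := (wordJump_le_iff hw).2 ((covers_wordJump hw _).mono hxy le_rfl)
  map_add x := by
    have h := wordJump_comp_add hw L x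
    rw [show (fun j => w (j + L)) = w from funext hper] at h
    linarith

/-- Reading the word backwards turns the arch jump into the lower adjoint of the
backward arch jump. -/
theorem galoisConnection_wordJump (hw : ∀ x, Covers w x (x + L))
    (hw' : ∀ j, w' j = w (-1 - j)) :
    GaloisConnection (wordJump w) (fun x => -wordJump w' (-x)) := by
  have hcov (x : ℤ) : Covers w' x (x + L) :=
    (covers_reflect_iff hw').2 (by simpa [neg_add, add_comm] using hw (-(x + L)))
  intro x b
  rw [le_neg, wordJump_le_iff hcov, covers_reflect_iff hw', neg_neg, neg_neg, wordJump_le_iff hw]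

end Word

theorem Int.exists_lt_natCast_modEq {n : ℕ} (hn : 0 < n) (x : ℤ) :
    ∃ k < n, x ≡ k [ZMOD n] := by
  have h₁ := Int.emod_nonneg x (by omega : (n : ℤ) ≠ 0)
  have h₂ := Int.emod_lt_of_pos x (by omega : (0 : ℤ) < n)
  exact ⟨(x % n).toNat, by omega, by rw [Int.toNat_of_nonneg h₁]; exact (Int.mod_modEq x n).symm⟩

section OmegaWord

variable (u : List A) (hu : u ≠ [])

/-- `u^ω` extended to negative positions, so that `u.reverse` reads it backwards. -/
def omegaWordInt (x : ℤ) : A := omegaWord u hu (x % u.length).toNat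

theorem omegaWordInt_eq_getElem {x : ℤ} {k : ℕ} (hk : k < u.length)
    (h : x ≡ k [ZMOD u.length]) :
    omegaWordInt u hu x = u[k] := by
  have hx : (x % u.length).toNat = k := by
    rw [show x % u.length = k % u.length from h, Int.emod_eq_of_lt (by omega) (by omega)]
    simp
  simp [omegaWordInt, omegaWord, hx, Nat.mod_eq_of_lt hk]

theorem omegaWordInt_natCast (n : ℕ) : omegaWordInt u hu n = omegaWord u hu n :=
  omegaWordInt_eq_getElem u hu (Nat.mod_lt n (List.length_pos_iff.2 hu))
    (Int.natCast_modEq_iff.2 (Nat.mod_modEq n _).symm)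

theorem omegaWordInt_add_length (x : ℤ) :
    omegaWordInt u hu (x + u.length) = omegaWordInt u hu x := by
  simp [omegaWordInt]

theorem covers_omegaWordInt (hA : ∀ a : A, a ∈ u) (x : ℤ) :
    Covers (omegaWordInt u hu) x (x + u.length) := by
  have hL : (0 : ℤ) < u.length := by exact_mod_cast List.length_pos_iff.2 hu
  refine ⟨by linarith, fun c => ?_⟩
  obtain ⟨r, hr, rfl⟩ := List.getElem_of_mem (hA c)
  have h₁ := Int.emod_nonneg (r - x) hL.ne'
  have h₂ := Int.emod_lt_of_pos (r - x) hL
  refine ⟨x + (r - x) % u.length, by linarith, by linarith, omegaWordInt_eq_getElem u hu hr ?_⟩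
  calc x + (r - x) % u.length ≡ x + (r - x) [ZMOD u.length] := (Int.mod_modEq _ _).add_left x
    _ = r := by ring

theorem omegaWordInt_rotate (n : ℕ) (hr : u.rotate n ≠ []) (x : ℤ) :
    omegaWordInt (u.rotate n) hr x = omegaWordInt u hu (x + n) := by
  have hL := List.length_pos_iff.2 hu
  obtain ⟨k, hk, hxk⟩ := Int.exists_lt_natCast_modEq hL x
  rw [omegaWordInt_eq_getElem (u.rotate n) hr (by rwa [List.length_rotate])
    (by rwa [List.length_rotate]), List.getElem_rotate,
    omegaWordInt_eq_getElem u hu (Nat.mod_lt _ hL)]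
  push_cast
  exact (hxk.add_right n).trans (Int.mod_modEq _ _).symm

theorem omegaWordInt_reverse (hr : u.reverse ≠ []) (x : ℤ) :
    omegaWordInt u.reverse hr x = omegaWordInt u hu (-1 - x) := by
  have hL := List.length_pos_iff.2 hu
  obtain ⟨k, hk, hxk⟩ := Int.exists_lt_natCast_modEq hL x
  rw [omegaWordInt_eq_getElem u.reverse hr (by rwa [List.length_reverse])
    (by rwa [List.length_reverse]), List.getElem_reverse,
    omegaWordInt_eq_getElem u hu (k := u.length - 1 - k) (by omega)]
  calc -1 - x ≡ u.length + (-1 - k) [ZMOD u.length] :=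
        (hxk.sub_left (-1)).trans Int.add_modEq_left.symm
    _ = ((u.length - 1 - k : ℕ) : ℤ) := by omega

theorem covers_natCast_iff (i j : ℕ) :
    Covers (omegaWordInt u hu) i j ↔
      i < j ∧ ∀ a : A, ∃ m : ℕ, i ≤ m ∧ m < j ∧ omegaWord u hu m = a := by
  refine and_congr Int.ofNat_lt (forall_congr' fun a => ⟨?_, ?_⟩)
  · rintro ⟨m, h₁, h₂, h₃⟩
    lift m to ℕ using by omega
    exact ⟨m, by omega, by omega, by rwa [omegaWordInt_natCast] at h₃⟩
  · rintro ⟨m, h₁, h₂, h₃⟩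
    exact ⟨m, by omega, by omega, by rwa [omegaWordInt_natCast]⟩

theorem archJump_eq_wordJump (hA : ∀ a : A, a ∈ u) (n : ℕ) :
    (archJump u hu n : ℤ) = wordJump (omegaWordInt u hu) n := by
  have hw := covers_omegaWordInt u hu hA
  have hset : archJump u hu n = sInf {j : ℕ | Covers (omegaWordInt u hu) n j} := by
    simp only [archJump, covers_natCast_iff]
  obtain ⟨t, ht⟩ : ∃ t : ℕ, wordJump (omegaWordInt u hu) n = t :=
    ⟨_, (Int.toNat_of_nonneg (by linarith [(covers_wordJump hw (n : ℤ)).1])).symm⟩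
  refine le_antisymm ?_ ((wordJump_le_iff hw).2 ?_)
  · rw [ht, hset, Nat.cast_le]
    exact Nat.sInf_le (by simpa [ht] using covers_wordJump hw (n : ℤ))
  · rw [hset]
    exact Nat.sInf_mem (s := {j : ℕ | Covers _ (n : ℤ) j}) ⟨n + u.length, hw n⟩

theorem archPeriod_eq_sInf_periods (hA : ∀ a : A, a ∈ u) :
    archPeriod u hu = sInf (periods u.length (wordJump (omegaWordInt u hu)) 0) := by
  have hsemi : Function.Semiconj ((↑) : ℕ → ℤ) (archJump u hu) (wordJump (omegaWordInt u hu)) :=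
    archJump_eq_wordJump u hu hA
  unfold archPeriod
  congr 1
  ext p
  rw [← Nat.cast_zero (R := ℤ)]
  simp only [IsArchPeriodAt, periods, Set.mem_ofPred_eq, ← (hsemi.iterate_right _).eq,
    Int.natCast_modEq_iff]

theorem archPeriod_rotate (hA : ∀ a : A, a ∈ u) (n : ℕ) (hr : u.rotate n ≠ []) :
    archPeriod (u.rotate n) hr = archPeriod u hu := by
  have hL : (0 : ℤ) < u.length := by exact_mod_cast List.length_pos_iff.2 hu
  have hw := covers_omegaWordInt u hu hA
  have hF := isDeg1Lift_wordJump hw (omegaWordInt_add_length u hu)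
  have hsemi : Function.Semiconj (· + (n : ℤ)) (wordJump (omegaWordInt (u.rotate n) hr))
      (wordJump (omegaWordInt u hu)) := fun x => by
    rw [show omegaWordInt (u.rotate n) hr = fun j => omegaWordInt u hu (j + n) from
      funext (omegaWordInt_rotate u hu n hr), wordJump_comp_add hw]
    ring
  have hshift := periods_semiconj (L := u.length)
    (fun a b => ⟨Int.ModEq.add_right_cancel' _, Int.ModEq.add_right _⟩) hsemi 0
  rw [archPeriod_eq_sInf_periods _ _ fun a => List.mem_rotate.2 (hA a),
    archPeriod_eq_sInf_periods u hu hA, List.length_rotate, ← hshift, hF.periods_eq hL]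

theorem archPeriod_reverse (hA : ∀ a : A, a ∈ u) (hr : u.reverse ≠ []) :
    archPeriod u.reverse hr = archPeriod u hu := by
  have hL : (0 : ℤ) < u.length := by exact_mod_cast List.length_pos_iff.2 hu
  have hw := covers_omegaWordInt u hu hA
  have hwr := covers_omegaWordInt u.reverse hr fun a => List.mem_reverse.2 (hA a)
  have hperr := omegaWordInt_add_length u.reverse hr
  rw [List.length_reverse] at hwr hperr
  have hF := isDeg1Lift_wordJump hw (omegaWordInt_add_length u hu)
  have hR := (isDeg1Lift_wordJump hwr hperr).conj_neg
  have gc := galoisConnection_wordJump hw (omegaWordInt_reverse u hu hr)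
  have hneg := periods_semiconj (L := u.length) (fun a b => Int.neg_modEq_neg)
    (semiconj_neg_conj_neg (wordJump (omegaWordInt u.reverse hr))) 0
  rw [neg_zero] at hneg
  rw [archPeriod_eq_sInf_periods _ _ fun a => List.mem_reverse.2 (hA a),
    archPeriod_eq_sInf_periods u hu hA, List.length_reverse, ← hneg,
    hF.periods_eq_of_galoisConnection hR hL gc]

end OmegaWord

theorem stmt17_general {A : Type*} (u : List A) (hu : u ≠ [])
    (hA : ∀ a : A, a ∈ u) :
    (∀ u₁ u₂ : List A, u = u₁ ++ u₂ → ∀ hv : u₂ ++ u₁ ≠ [],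
        archPeriod (u₂ ++ u₁) hv = archPeriod u hu) ∧
    (∀ hr : u.reverse ≠ [], archPeriod u.reverse hr = archPeriod u hu) := by
  refine ⟨?_, archPeriod_reverse u hu hA⟩
  rintro u₁ u₂ rfl hv
  have h := List.rotate_append_length_eq u₁ u₂
  simpa only [h] using archPeriod_rotate (u₁ ++ u₂) hu hA u₁.length (h ▸ hv)

/-- conjugates and the reversal of `u` have the same arch-period as `u`. -/
theorem stmt17 {A : Type*} [Fintype A] (u : List A) (hu : u ≠ [])
    (hA : ∀ a : A, a ∈ u) :
    (∀ u₁ u₂ : List A, u = u₁ ++ u₂ → ∀ hv : u₂ ++ u₁ ≠ [],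
        archPeriod (u₂ ++ u₁) hv = archPeriod u hu) ∧
    (∀ hr : u.reverse ≠ [], archPeriod u.reverse hr = archPeriod u hu) :=
  stmt17_general u hu hA
end
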